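/- arXiv:2410.13165 — 8 statements merged into one kernel-verified Lean document; each statement's English description precedes it below -/
import Mathlib

section
/- Let σ₁, σ₂ be real numbers. The six inequalities (i) 2σ₁² − 2|σ₁| + 1 − |σ₁ + σ₂| + 2σ₁σ₂ > 0, (ii) 2σ₁² − 2|σ₁| + 1 − |σ₁ − σ₂| − 2σ₁σ₂ > 0, (iii) 2σ₂² − 2|σ₂| + 1 − |σ₁ + σ₂| + 2σ₁σ₂ > 0, (iv) 2σ₂² − 2|σ₂| + 1 − |σ₁ − σ₂| − 2σ₁σ₂ > 0, (v) 1 − |σ₁| − σ₂² > 0, (vi) 1 − |σ₂| − σ₁² > 0 hold simultaneously if and only if |σ₁| < 1/2 and |σ₂| < 1/2. -/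
set_option maxHeartbeats 4000000 in
theorem d2q9_mp_aux (σ₁ σ₂ : ℝ)
    (q1 : 2*σ₁^2 - 2*|σ₁| + 1 - |σ₁ + σ₂| + 2*σ₁*σ₂ > 0)
    (q2 : 2*σ₁^2 - 2*|σ₁| + 1 - |σ₁ - σ₂| - 2*σ₁*σ₂ > 0)
    (q3 : 2*σ₂^2 - 2*|σ₂| + 1 - |σ₁ + σ₂| + 2*σ₁*σ₂ > 0)
    (q4 : 2*σ₂^2 - 2*|σ₂| + 1 - |σ₁ - σ₂| - 2*σ₁*σ₂ > 0)
    (q5 : 1 - |σ₁| - σ₂^2 > 0)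
    (q6 : 1 - |σ₂| - σ₁^2 > 0) :
    |σ₁| < 1/2 ∧ |σ₂| < 1/2 := by
  rcases abs_cases σ₁ with ⟨e1, h1⟩ | ⟨e1, h1⟩ <;>
  rcases abs_cases σ₂ with ⟨e2, h2⟩ | ⟨e2, h2⟩ <;>
  rcases abs_cases (σ₁ + σ₂) with ⟨e3, h3⟩ | ⟨e3, h3⟩ <;>
  rcases abs_cases (σ₁ - σ₂) with ⟨e4, h4⟩ | ⟨e4, h4⟩ <;>
  simp only [e1, e2, e3, e4] at q1 q2 q3 q4 q5 q6 ⊢ <;>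
  constructor <;>
  nlinarith

set_option maxHeartbeats 4000000 in
theorem d2q9_mpr_aux (σ₁ σ₂ : ℝ) (p : |σ₁| < 1/2) (q : |σ₂| < 1/2) :
    2*σ₁^2 - 2*|σ₁| + 1 - |σ₁ + σ₂| + 2*σ₁*σ₂ > 0 ∧
    2*σ₁^2 - 2*|σ₁| + 1 - |σ₁ - σ₂| - 2*σ₁*σ₂ > 0 ∧
    2*σ₂^2 - 2*|σ₂| + 1 - |σ₁ + σ₂| + 2*σ₁*σ₂ > 0 ∧
    2*σ₂^2 - 2*|σ₂| + 1 - |σ₁ - σ₂| - 2*σ₁*σ₂ > 0 ∧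
    1 - |σ₁| - σ₂^2 > 0 ∧
    1 - |σ₂| - σ₁^2 > 0 := by
  rcases abs_cases σ₁ with ⟨e1, h1⟩ | ⟨e1, h1⟩ <;>
  rcases abs_cases σ₂ with ⟨e2, h2⟩ | ⟨e2, h2⟩ <;>
  rcases abs_cases (σ₁ + σ₂) with ⟨e3, h3⟩ | ⟨e3, h3⟩ <;>
  rcases abs_cases (σ₁ - σ₂) with ⟨e4, h4⟩ | ⟨e4, h4⟩ <;>
  simp only [e1, e2, e3, e4] at p q ⊢ <;>
  clear e1 e2 e3 e4 <;>
  first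
  | (exfalso; linarith)
  | (have A1 : (0:ℝ) < 1/2 - σ₁ := by linarith
     have A2 : (0:ℝ) < 1/2 + σ₁ := by linarith
     have B1 : (0:ℝ) < 1/2 - σ₂ := by linarith
     have B2 : (0:ℝ) < 1/2 + σ₂ := by linarith
     clear p q
     refine ⟨?_, ?_, ?_, ?_, ?_, ?_⟩
     · nlinarith [mul_pos A1 B1, mul_pos A1 B2, mul_pos A2 B1, mul_pos A2 B2,
         sq_nonneg (σ₁ - σ₂), sq_nonneg (σ₁ + σ₂), mul_pos B1 B2]
     · nlinarith [mul_pos A1 B1, mul_pos A1 B2, mul_pos A2 B1, mul_pos A2 B2,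
         sq_nonneg (σ₁ - σ₂), sq_nonneg (σ₁ + σ₂), mul_pos B1 B2]
     · nlinarith [mul_pos A1 B1, mul_pos A1 B2, mul_pos A2 B1, mul_pos A2 B2,
         sq_nonneg (σ₁ - σ₂), sq_nonneg (σ₁ + σ₂), mul_pos A1 A2]
     · nlinarith [mul_pos A1 B1, mul_pos A1 B2, mul_pos A2 B1, mul_pos A2 B2,
         sq_nonneg (σ₁ - σ₂), sq_nonneg (σ₁ + σ₂), mul_pos A1 A2]
     · nlinarith [mul_pos B1 B2]
     · nlinarith [mul_pos A1 A2])

theorem d2q9_six_inequalities_iff (σ₁ σ₂ : ℝ) :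
    (2*σ₁^2 - 2*|σ₁| + 1 - |σ₁ + σ₂| + 2*σ₁*σ₂ > 0 ∧
     2*σ₁^2 - 2*|σ₁| + 1 - |σ₁ - σ₂| - 2*σ₁*σ₂ > 0 ∧
     2*σ₂^2 - 2*|σ₂| + 1 - |σ₁ + σ₂| + 2*σ₁*σ₂ > 0 ∧
     2*σ₂^2 - 2*|σ₂| + 1 - |σ₁ - σ₂| - 2*σ₁*σ₂ > 0 ∧
     1 - |σ₁| - σ₂^2 > 0 ∧
     1 - |σ₂| - σ₁^2 > 0) ↔
    (|σ₁| < 1/2 ∧ |σ₂| < 1/2) := by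
  constructor
  · rintro ⟨q1, q2, q3, q4, q5, q6⟩
    exact d2q9_mp_aux σ₁ σ₂ q1 q2 q3 q4 q5 q6
  · rintro ⟨p, q⟩
    exact d2q9_mpr_aux σ₁ σ₂ p q
end

section
/- Let σ₁, σ₂ be real numbers. There exists a real number m satisfying m < min{(−2|σ₁| + 1 + 2σ₁²)/3, (−2|σ₂| + 1 + 2σ₂²)/3} and m > max{(−1 + 2(σ₁² + σ₂²))/3, (−2σ₁σ₂ + |σ₁ + σ₂|)/3, (2σ₁σ₂ + |σ₁ − σ₂|)/3} if and only if |σ₁| < 1/2 and |σ₂| < 1/2. -/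
lemma d2q9_aux (x y : ℝ) (hx : |x| < 1/2) (hy : |y| < 1/2) :
    (-2*x*y + |x + y|)/3 < (-2*|x| + 1 + 2*x^2)/3 := by
  obtain ⟨hx1, hx2⟩ := abs_lt.mp hx
  obtain ⟨hy1, hy2⟩ := abs_lt.mp hy
  clear hx hy
  rcases abs_cases (x + y) with ⟨he, hs⟩ | ⟨he, hs⟩ <;>
    rcases abs_cases x with ⟨he1, hs1⟩ | ⟨he1, hs1⟩ <;>
    simp only [he, he1]
  · nlinarith [mul_pos (by linarith : (0:ℝ) < 1 - 2*x) (by linarith : (0:ℝ) < 1 - x - y)]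
  · nlinarith [sq_nonneg (2*x + 1), mul_pos (by linarith : (0:ℝ) < 1 - 2*x)
      (by linarith : (0:ℝ) < 1/2 - y)]
  · nlinarith [sq_nonneg (2*x - 1), mul_pos (by linarith : (0:ℝ) < 2*x + 1)
      (by linarith : (0:ℝ) < y + 1/2)]
  · nlinarith [mul_pos (by linarith : (0:ℝ) < 2*x + 1) (by linarith : (0:ℝ) < 1 + x + y)]

set_option maxHeartbeats 1000000 in
theorem d2q9_fourth_moment_exists_iff (σ₁ σ₂ : ℝ) :
    (∃ m : ℝ,
      m < min ((-2*|σ₁| + 1 + 2*σ₁^2)/3) ((-2*|σ₂| + 1 + 2*σ₂^2)/3) ∧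
      m > max (max ((-1 + 2*(σ₁^2 + σ₂^2))/3) ((-2*σ₁*σ₂ + |σ₁ + σ₂|)/3))
              ((2*σ₁*σ₂ + |σ₁ - σ₂|)/3)) ↔
    (|σ₁| < 1/2 ∧ |σ₂| < 1/2) := by
  constructor
  · rintro ⟨m, hu, hl⟩
    have habs1 : 2*|σ₁| ≤ |σ₁ + σ₂| + |σ₁ - σ₂| := by
      have h0 := abs_add_le (σ₁ + σ₂) (σ₁ - σ₂)
      have h : σ₁ + σ₂ + (σ₁ - σ₂) = 2*σ₁ := by ring
      rw [h] at h0
      calc 2*|σ₁| = |2*σ₁| := by rw [abs_mul]; norm_num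
      _ ≤ _ := h0
    have habs2 : 2*|σ₂| ≤ |σ₁ + σ₂| + |σ₁ - σ₂| := by
      have h0 := abs_sub (σ₁ + σ₂) (σ₁ - σ₂)
      have h : σ₁ + σ₂ - (σ₁ - σ₂) = 2*σ₂ := by ring
      rw [h] at h0
      calc 2*|σ₂| = |2*σ₂| := by rw [abs_mul]; norm_num
      _ ≤ _ := h0
    obtain ⟨hu1, hu2⟩ := lt_min_iff.mp hu
    obtain ⟨hl12, hl3⟩ := max_lt_iff.mp hl
    obtain ⟨hl1, hl2⟩ := max_lt_iff.mp hl12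
    have hL1U1 := hl1.trans hu1
    have hL1U2 := hl1.trans hu2
    have hL2U1 := hl2.trans hu1
    have hL2U2 := hl2.trans hu2
    have hL3U1 := hl3.trans hu1
    have hL3U2 := hl3.trans hu2
    clear hu hl hl12 hu1 hu2 hl1 hl2 hl3
    have hs1 := sq_abs σ₁
    have hs2 := sq_abs σ₂
    constructor
    · have h3 : 2*|σ₁|^2 - 3*|σ₁| + 1 > 0 := by linarith
      have h4 : |σ₁| < 1 := by
        have := sq_nonneg |σ₂|
        linarith
      by_contra hc
      push_neg at hc
      have h5 : (2*|σ₁| - 1) * (1 - |σ₁|) ≥ 0 :=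
        mul_nonneg (by linarith) (by linarith)
      nlinarith [h5, h3]
    · have h3 : 2*|σ₂|^2 - 3*|σ₂| + 1 > 0 := by linarith
      have h4 : |σ₂| < 1 := by
        have := sq_nonneg |σ₁|
        linarith
      by_contra hc
      push_neg at hc
      have h5 : (2*|σ₂| - 1) * (1 - |σ₂|) ≥ 0 :=
        mul_nonneg (by linarith) (by linarith)
      nlinarith [h5, h3]
  · rintro ⟨h1, h2⟩
    obtain ⟨h1l, h1r⟩ := abs_lt.mp h1
    obtain ⟨h2l, h2r⟩ := abs_lt.mp h2
    have hq1 : σ₁^2 < 1/4 := by nlinarith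
    have hq2 : σ₂^2 < 1/4 := by nlinarith
    have hn2 : |-σ₂| < 1/2 := by rwa [abs_neg]
    have hn1 : |-σ₁| < 1/2 := by rwa [abs_neg]
    have k1 : (-2*σ₁*σ₂ + |σ₁ + σ₂|)/3 < (-2*|σ₁| + 1 + 2*σ₁^2)/3 := d2q9_aux σ₁ σ₂ h1 h2
    have k2 : (-2*σ₁*σ₂ + |σ₁ + σ₂|)/3 < (-2*|σ₂| + 1 + 2*σ₂^2)/3 := by
      have := d2q9_aux σ₂ σ₁ h2 h1
      rw [add_comm σ₂ σ₁] at this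
      linarith
    have k3 : (2*σ₁*σ₂ + |σ₁ - σ₂|)/3 < (-2*|σ₁| + 1 + 2*σ₁^2)/3 := by
      have := d2q9_aux σ₁ (-σ₂) h1 hn2
      have he : σ₁ + -σ₂ = σ₁ - σ₂ := by ring
      rw [he] at this
      linarith
    have k4 : (2*σ₁*σ₂ + |σ₁ - σ₂|)/3 < (-2*|σ₂| + 1 + 2*σ₂^2)/3 := by
      have := d2q9_aux σ₂ (-σ₁) h2 hn1
      have he : σ₂ + -σ₁ = -(σ₁ - σ₂) := by ring
      rw [he, abs_neg] at this
      nlinarith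
    have key : max (max ((-1 + 2*(σ₁^2 + σ₂^2))/3) ((-2*σ₁*σ₂ + |σ₁ + σ₂|)/3))
              ((2*σ₁*σ₂ + |σ₁ - σ₂|)/3)
        < min ((-2*|σ₁| + 1 + 2*σ₁^2)/3) ((-2*|σ₂| + 1 + 2*σ₂^2)/3) := by
      have hs1 := sq_abs σ₁
      have hs2 := sq_abs σ₂
      exact max_lt (max_lt (lt_min (by linarith) (by linarith)) (lt_min k1 k2))
        (lt_min k3 k4)
    obtain ⟨m, hm1, hm2⟩ := exists_between key
    exact ⟨m, hm2, hm1⟩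
end

section
/- Let σ₁, σ₂, m be real numbers. Define the nine weights ω₁ = (1 − 2(σ₁² + σ₂²) + 3m)/3, ω₂ = (2σ₁ + 1 + 2σ₁² − 3m)/6, ω₃ = (2σ₂ + 1 + 2σ₂² − 3m)/6, ω₄ = (−2σ₁ + 1 + 2σ₁² − 3m)/6, ω₅ = (−2σ₂ + 1 + 2σ₂² − 3m)/6, ω₆ = (3m + 2σ₁σ₂ + σ₁ + σ₂)/12, ω₇ = (3m − 2σ₁σ₂ − σ₁ + σ₂)/12, ω₈ = (3m + 2σ₁σ₂ − σ₁ − σ₂)/12, ω₉ = (3m − 2σ₁σ₂ + σ₁ − σ₂)/12. Then all nine weights are strictly positive if and only if the following three conditions hold: m > (−1 + 2(σ₁² + σ₂²))/3; m < min{(−2|σ₁| + 1 + 2σ₁²)/3, (−2|σ₂| + 1 + 2σ₂²)/3}; and m > max{(−2σ₁σ₂ + |σ₁ + σ₂|)/3, (2σ₁σ₂ + |σ₁ − σ₂|)/3}. -/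
set_option maxHeartbeats 2000000 in
theorem d2q9_weights_positive_iff (σ₁ σ₂ m : ℝ) :
    (0 < (1 - 2*(σ₁^2 + σ₂^2) + 3*m)/3 ∧
     0 < (2*σ₁ + 1 + 2*σ₁^2 - 3*m)/6 ∧
     0 < (2*σ₂ + 1 + 2*σ₂^2 - 3*m)/6 ∧
     0 < (-2*σ₁ + 1 + 2*σ₁^2 - 3*m)/6 ∧
     0 < (-2*σ₂ + 1 + 2*σ₂^2 - 3*m)/6 ∧
     0 < (3*m + 2*σ₁*σ₂ + σ₁ + σ₂)/12 ∧
     0 < (3*m - 2*σ₁*σ₂ - σ₁ + σ₂)/12 ∧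
     0 < (3*m + 2*σ₁*σ₂ - σ₁ - σ₂)/12 ∧
     0 < (3*m - 2*σ₁*σ₂ + σ₁ - σ₂)/12) ↔
    (m > (-1 + 2*(σ₁^2 + σ₂^2))/3 ∧
     m < min ((-2*|σ₁| + 1 + 2*σ₁^2)/3) ((-2*|σ₂| + 1 + 2*σ₂^2)/3) ∧
     m > max ((-2*σ₁*σ₂ + |σ₁ + σ₂|)/3) ((2*σ₁*σ₂ + |σ₁ - σ₂|)/3)) := by
  rw [gt_iff_lt, gt_iff_lt, lt_min_iff, max_lt_iff]
  rcases abs_cases σ₁ with ⟨h1, h1'⟩ | ⟨h1, h1'⟩ <;>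
  rcases abs_cases σ₂ with ⟨h2, h2'⟩ | ⟨h2, h2'⟩ <;>
  rcases abs_cases (σ₁ + σ₂) with ⟨h3, h3'⟩ | ⟨h3, h3'⟩ <;>
  rcases abs_cases (σ₁ - σ₂) with ⟨h4, h4'⟩ | ⟨h4, h4'⟩ <;>
  rw [h1, h2, h3, h4] <;>
  exact ⟨fun ⟨a, b, c, d, e, f, g, i, j⟩ =>
      ⟨by linarith, ⟨by linarith, by linarith⟩, by linarith, by linarith⟩,
    fun ⟨a, ⟨b, c⟩, d, e⟩ =>
      ⟨by linarith, by linarith, by linarith, by linarith, by linarith,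
       by linarith, by linarith, by linarith, by linarith⟩⟩
end

section
/- Let σ₁, σ₂ be real numbers such that either both lie in the open interval (1/2, 1) or both lie in the open interval (−1, −1/2). Then at least one of the two inequalities 2σ₁² − 2|σ₁| + 1 − |σ₁ − σ₂| − 2σ₁σ₂ > 0 and 2σ₂² − 2|σ₂| + 1 − |σ₁ − σ₂| − 2σ₁σ₂ > 0 fails, i.e., min{2σ₁² − 2|σ₁| + 1 − |σ₁ − σ₂| − 2σ₁σ₂, 2σ₂² − 2|σ₂| + 1 − |σ₁ − σ₂| − 2σ₁σ₂} < 0. -/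
theorem d2q9_exclude_same_sign_region (σ₁ σ₂ : ℝ)
    (h : (σ₁ ∈ Set.Ioo (1/2 : ℝ) 1 ∧ σ₂ ∈ Set.Ioo (1/2 : ℝ) 1) ∨
         (σ₁ ∈ Set.Ioo (-1 : ℝ) (-1/2) ∧ σ₂ ∈ Set.Ioo (-1 : ℝ) (-1/2))) :
    min (2*σ₁^2 - 2*|σ₁| + 1 - |σ₁ - σ₂| - 2*σ₁*σ₂)
        (2*σ₂^2 - 2*|σ₂| + 1 - |σ₁ - σ₂| - 2*σ₁*σ₂) < 0 := by
  have key : (2*σ₁^2 - 2*|σ₁| + 1 - |σ₁ - σ₂| - 2*σ₁*σ₂) +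
      (2*σ₂^2 - 2*|σ₂| + 1 - |σ₁ - σ₂| - 2*σ₁*σ₂) < 0 := by
    rcases h with ⟨⟨h1, h2⟩, h3, h4⟩ | ⟨⟨h1, h2⟩, h3, h4⟩
    · rw [abs_of_pos (show (0:ℝ) < σ₁ by linarith),
        abs_of_pos (show (0:ℝ) < σ₂ by linarith)]
      rcases abs_cases (σ₁ - σ₂) with ⟨he, hs⟩ | ⟨he, hs⟩ <;> rw [he] <;>
        nlinarith [sq_nonneg (σ₁ - σ₂)]
    · rw [abs_of_neg (show σ₁ < 0 by linarith),
        abs_of_neg (show σ₂ < 0 by linarith)]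
      rcases abs_cases (σ₁ - σ₂) with ⟨he, hs⟩ | ⟨he, hs⟩ <;> rw [he] <;>
        nlinarith [sq_nonneg (σ₁ - σ₂)]
  rcases le_total (2*σ₁^2 - 2*|σ₁| + 1 - |σ₁ - σ₂| - 2*σ₁*σ₂)
      (2*σ₂^2 - 2*|σ₂| + 1 - |σ₁ - σ₂| - 2*σ₁*σ₂) with hle | hle
  · rw [min_eq_left hle]; linarith
  · rw [min_eq_right hle]; linarith
end

section
/- Let σ₂ be a real number with −1 < σ₂ < 0 and σ₂ ≠ −1/2, and set σ₁ = −1 − σ₂. Then 2σ₂² − 2|σ₂| + 1 − |σ₁ − σ₂| − 2σ₁σ₂ < 0. -/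
theorem d2q9_exclude_segment_neg (σ₂ : ℝ) (h₁ : -1 < σ₂) (h₂ : σ₂ < 0)
    (h₃ : σ₂ ≠ -1/2) :
    2*σ₂^2 - 2*|σ₂| + 1 - |(-1 - σ₂) - σ₂| - 2*(-1 - σ₂)*σ₂ < 0 := by
  rw [abs_of_neg h₂]
  rcases lt_or_gt_of_ne (sub_ne_zero.mpr (Ne.symm h₃)) with h | h
  · rw [abs_of_neg (by linarith : -1 - σ₂ - σ₂ < 0)]
    nlinarith [mul_pos (by linarith : (0:ℝ) < 2*σ₂+1) (by linarith : (0:ℝ) < -2*σ₂)]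
  · rw [abs_of_pos (by linarith : (0:ℝ) < -1 - σ₂ - σ₂)]
    nlinarith [mul_pos (by linarith : (0:ℝ) < -(2*σ₂+1)) (by linarith : (0:ℝ) < 2*σ₂+2)]
end

section
/- Let n ≥ 1, let ω : Fin n → ℝ satisfy ω k ≠ 0 for all k and ∑ₖ ω k = 1, and let f : Fin n → ℝ. Set φ := ∑ₖ f k and define the post-collision populations f' k := −f k + 2 ω k · φ. Then ∑ₖ (f' k)²/(2 ω k) = ∑ₖ (f k)²/(2 ω k). -/
theorem collision_conserves_entropy (n : ℕ) (hn : 1 ≤ n) (ω f : Fin n → ℝ)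
    (hω : ∀ k, ω k ≠ 0) (hsum : ∑ k, ω k = 1) :
    ∑ k, (-f k + 2 * ω k * (∑ j, f j))^2 / (2 * ω k) =
      ∑ k, (f k)^2 / (2 * ω k) := by
  set φ := ∑ j, f j with hφ
  have key : ∀ k, (-f k + 2 * ω k * φ)^2 / (2 * ω k)
      = (f k)^2 / (2 * ω k) - 2 * f k * φ + 2 * ω k * φ^2 := by
    intro k
    have h := hω k
    field_simp
    ring
  simp only [key]
  rw [Finset.sum_add_distrib, Finset.sum_sub_distrib]
  have h1 : ∑ k, 2 * f k * φ = 2 * φ^2 := by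
    rw [← Finset.sum_mul, ← Finset.mul_sum, ← hφ]; ring
  have h2 : ∑ k, 2 * ω k * φ^2 = 2 * φ^2 := by
    rw [show (fun k => 2 * ω k * φ^2) = (fun k => (2*φ^2) * ω k) by funext k; ring,
      ← Finset.mul_sum, hsum]; ring
  rw [h1, h2]; ring
end

section
/- Let ξ be a nonzero real number and consider the 3×3 real matrix G̃ with rows (0, 1, 1), (e^{−ξ}, 0, e^{−ξ}), (0, 0, −e^{ξ}). Then the characteristic polynomial of G̃ factors as (X − e^{−ξ/2})(X + e^{−ξ/2})(X + e^{ξ}), and its three roots e^{−ξ/2}, −e^{−ξ/2}, −e^{ξ} are pairwise distinct. -/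
open Polynomial in
theorem d1q3_charpoly_half_sigma (ξ : ℝ) (hξ : ξ ≠ 0) :
    let G : Matrix (Fin 3) (Fin 3) ℝ :=
      !![0, 1, 1; Real.exp (-ξ), 0, Real.exp (-ξ); 0, 0, -Real.exp ξ]
    G.charpoly = (X - C (Real.exp (-ξ/2))) * (X + C (Real.exp (-ξ/2))) * (X + C (Real.exp ξ)) ∧
    Real.exp (-ξ/2) ≠ -Real.exp (-ξ/2) ∧
    Real.exp (-ξ/2) ≠ -Real.exp ξ ∧
    -Real.exp (-ξ/2) ≠ -Real.exp ξ := by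
  intro G
  have hsq : Real.exp (-ξ/2) * Real.exp (-ξ/2) = Real.exp (-ξ) := by
    rw [← Real.exp_add]; ring_nf
  refine ⟨?_, ?_, ?_, ?_⟩
  · rw [Matrix.charpoly, Matrix.det_fin_three]
    simp [Matrix.charmatrix_apply_eq, Matrix.charmatrix_apply_ne, G, ← hsq,
      Matrix.vecHead, Matrix.vecTail]
    ring
  · intro h
    have := Real.exp_pos (-ξ/2); nlinarith
  · intro h
    have := Real.exp_pos (-ξ/2); have := Real.exp_pos ξ; nlinarith
  · intro h
    have h2 : Real.exp (-ξ/2) = Real.exp ξ := neg_injective h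
    have := Real.exp_injective h2
    apply hξ; linarith
end

section
/- Let d be a natural number with d ≥ 6. Then there is no function m : Fin d → Fin d → ℝ such that m is symmetric (m i j = m j i for all i, j), m i j > 0 for all i ≠ j, for every i the sum ∑_{j ≠ i} m i j < 1/3, and the sum over unordered pairs ∑_{i < j} m i j > (d − 3)/3. -/
theorem no_entropy_stable_moments_high_dim (d : ℕ) (hd : 6 ≤ d) :
    ¬ ∃ m : Fin d → Fin d → ℝ,
      (∀ i j, m i j = m j i) ∧
      (∀ i j, i ≠ j → 0 < m i j) ∧
      (∀ i, ∑ j ∈ Finset.univ.filter (fun j => j ≠ i), m i j < 1/3) ∧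
      ((d : ℝ) - 3)/3 < ∑ i, ∑ j ∈ Finset.univ.filter (fun j => i < j), m i j := by
  rintro ⟨m, hsym, hpos, hrow, hpair⟩
  set S := ∑ i, ∑ j ∈ Finset.univ.filter (fun j => i < j), m i j with hS
  have key : ∑ i, ∑ j ∈ Finset.univ.filter (fun j => j ≠ i), m i j = 2 * S := by
    have h1 : ∀ i : Fin d, (Finset.univ.filter (fun j => j ≠ i)) =
        Finset.univ.filter (fun j => i < j) ∪ Finset.univ.filter (fun j => j < i) := by
      intro i; ext j
      simp only [Finset.mem_filter, Finset.mem_union, Finset.mem_univ, true_and]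
      constructor
      · intro h; exact h.lt_or_gt.elim (fun h => Or.inr h) (fun h => Or.inl h)
      · rintro (h | h)
        · exact h.ne'
        · exact h.ne
    have h2 : ∀ i : Fin d, ∑ j ∈ Finset.univ.filter (fun j => j ≠ i), m i j =
        (∑ j ∈ Finset.univ.filter (fun j => i < j), m i j) +
        (∑ j ∈ Finset.univ.filter (fun j => j < i), m i j) := by
      intro i
      rw [h1 i, Finset.sum_union]
      rw [Finset.disjoint_filter]
      intro j _ hij hji
      exact absurd hji (not_lt_of_gt hij)
    rw [Finset.sum_congr rfl (fun i _ => h2 i), Finset.sum_add_distrib]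
    have h3 : ∑ i, ∑ j ∈ Finset.univ.filter (fun j => j < i), m i j = S := by
      have := Finset.sum_comm' (s := (Finset.univ : Finset (Fin d)))
        (t := fun i => Finset.univ.filter (fun j => j < i))
        (t' := (Finset.univ : Finset (Fin d)))
        (s' := fun j => Finset.univ.filter (fun i => j < i))
        (f := fun i j => m i j)
        (by intro x y; simp)
      rw [this, hS]
      exact Finset.sum_congr rfl fun j _ => Finset.sum_congr rfl fun i hi => hsym _ _
    rw [h3, hS]; ring
  have hrowsum : ∑ i, ∑ j ∈ Finset.univ.filter (fun j => j ≠ i), m i j < (d : ℝ) * (1/3) := by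
    have hne : (Finset.univ : Finset (Fin d)).Nonempty := by
      refine Finset.univ_nonempty_iff.mpr ?_
      exact Fin.pos_iff_nonempty.mp (by omega)
    calc ∑ i, ∑ j ∈ Finset.univ.filter (fun j => j ≠ i), m i j
        < ∑ _i : Fin d, (1/3 : ℝ) := Finset.sum_lt_sum_of_nonempty hne fun i _ => hrow i
      _ = (d : ℝ) * (1/3) := by rw [Finset.sum_const, Finset.card_univ, Fintype.card_fin,
            nsmul_eq_mul]
  rw [key] at hrowsum
  have hd' : (6 : ℝ) ≤ (d : ℝ) := by exact_mod_cast hd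
  linarith
end
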